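/- arXiv:2008.12913 — 7 statements merged into one kernel-verified Lean document; each statement's English description precedes it below -/
import Mathlib

section
/- Let R be a commutative ring and let X, Y be elements of SL(2, R). Then the Fricke identity holds: Tr(X)² + Tr(XY)² + Tr(Y)² = Tr(X)·Tr(XY)·Tr(Y) + Tr(X·Y·X⁻¹·Y⁻¹) + 2. -/
/-!
For a `2 × 2` matrix, `adj A = tr A - A`, so Cayley–Hamilton reads `A² = tr A · A - det A`.
Expanding `A B adj A adj B` with these two rules expresses its trace as a polynomial in
`tr A`, `tr B`, `tr AB`, `det A`, `det B`, for arbitrary `2 × 2` matrices over a commutative ring.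
On `SL(2, R)` the inverse is the adjugate and both determinants are `1`, which gives the identity.
-/

open Matrix

namespace Matrix

variable {R : Type*} [CommRing R]

theorem adjugate_fin_two_eq_trace_smul_one_sub (A : Matrix (Fin 2) (Fin 2) R) :
    adjugate A = trace A • (1 : Matrix (Fin 2) (Fin 2) R) - A := by
  ext i j
  fin_cases i <;> fin_cases j <;> simp [adjugate_fin_two, trace_fin_two]

theorem mul_self_fin_two_eq_trace_smul_sub_det (A : Matrix (Fin 2) (Fin 2) R) :
    A * A = trace A • A - det A • (1 : Matrix (Fin 2) (Fin 2) R) := by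
  have h := mul_adjugate A
  rw [adjugate_fin_two_eq_trace_smul_one_sub, mul_sub, Matrix.mul_smul, Matrix.mul_one] at h
  rw [← h, sub_sub_cancel]

theorem trace_mul_mul_self_fin_two (A B : Matrix (Fin 2) (Fin 2) R) :
    trace (B * (A * A)) = trace A * trace (B * A) - det A * trace B := by
  rw [mul_self_fin_two_eq_trace_smul_sub_det, mul_sub, Matrix.mul_smul, Matrix.mul_smul,
    Matrix.mul_one, trace_sub, trace_smul, trace_smul, smul_eq_mul, smul_eq_mul]

theorem trace_mul_self_fin_two (A : Matrix (Fin 2) (Fin 2) R) :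
    trace (A * A) = trace A ^ 2 - 2 * det A := by
  simpa [sq, mul_comm] using trace_mul_mul_self_fin_two A 1

theorem trace_mul_mul_adjugate_mul_adjugate_fin_two (A B : Matrix (Fin 2) (Fin 2) R) :
    trace (A * B * adjugate A * adjugate B) =
      det B * trace A ^ 2 + det A * trace B ^ 2 + trace (A * B) ^ 2
        - trace A * trace B * trace (A * B) - 2 * det A * det B := by
  have hABA : trace (A * B * A) = trace A * trace (A * B) - det A * trace B := by
    rw [trace_mul_comm, ← Matrix.mul_assoc, trace_mul_comm, trace_mul_mul_self_fin_two,
      trace_mul_comm B]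
  have hABB : trace (A * B * B) = trace B * trace (A * B) - det B * trace A := by
    rw [Matrix.mul_assoc, trace_mul_mul_self_fin_two]
  have hABAB : trace (A * B * A * B) = trace (A * B) ^ 2 - 2 * (det A * det B) := by
    rw [Matrix.mul_assoc (A * B), trace_mul_self_fin_two, det_mul]
  simp only [adjugate_fin_two_eq_trace_smul_one_sub, mul_sub, sub_mul, Matrix.mul_smul,
    Matrix.smul_mul, Matrix.mul_one, trace_sub, trace_smul, smul_eq_mul, hABA, hABB, hABAB]
  ring

end Matrix

/-- **Fricke identity** in `SL(2, R)` over a commutative ring `R`: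
`Tr(X)² + Tr(XY)² + Tr(Y)² = Tr(X)·Tr(XY)·Tr(Y) + Tr(X·Y·X⁻¹·Y⁻¹) + 2`. -/
theorem fricke_identity {R : Type*} [CommRing R]
    (X Y : Matrix.SpecialLinearGroup (Fin 2) R) :
    (trace (X : Matrix (Fin 2) (Fin 2) R)) ^ 2 +
      (trace ((X * Y : Matrix.SpecialLinearGroup (Fin 2) R) : Matrix (Fin 2) (Fin 2) R)) ^ 2 +
      (trace (Y : Matrix (Fin 2) (Fin 2) R)) ^ 2 =
    trace (X : Matrix (Fin 2) (Fin 2) R) *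
        trace ((X * Y : Matrix.SpecialLinearGroup (Fin 2) R) : Matrix (Fin 2) (Fin 2) R) *
        trace (Y : Matrix (Fin 2) (Fin 2) R) +
      trace ((X * Y * X⁻¹ * Y⁻¹ : Matrix.SpecialLinearGroup (Fin 2) R) :
        Matrix (Fin 2) (Fin 2) R) + 2 := by
  have hXY : ((X * Y : Matrix.SpecialLinearGroup (Fin 2) R) : Matrix (Fin 2) (Fin 2) R) =
      (X : Matrix (Fin 2) (Fin 2) R) * Y :=
    Matrix.SpecialLinearGroup.coe_mul X Y
  have hcomm : ((X * Y * X⁻¹ * Y⁻¹ : Matrix.SpecialLinearGroup (Fin 2) R) :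
      Matrix (Fin 2) (Fin 2) R) =
      (X : Matrix (Fin 2) (Fin 2) R) * Y * adjugate (X : Matrix (Fin 2) (Fin 2) R) *
        adjugate (Y : Matrix (Fin 2) (Fin 2) R) := by
    simp only [Matrix.SpecialLinearGroup.coe_mul, Matrix.SpecialLinearGroup.coe_inv]
  rw [hXY, hcomm, trace_mul_mul_adjugate_mul_adjugate_fin_two, X.det_coe, Y.det_coe]
  ring
end

section
/- In SL(2, ℤ[q,q⁻¹]), the matrices A_q and B_q satisfy Tr(A_q·B_q·A_q⁻¹·B_q⁻¹) + 2 = −(q−1)²·(1+q+q²)²·q⁻³. -/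
open Matrix LaurentPolynomial

/-- `q` as an element of the Laurent polynomial ring `ℤ[q,q⁻¹]`. -/
noncomputable abbrev q : LaurentPolynomial ℤ := T 1

/-- `q⁻¹` as an element of the Laurent polynomial ring `ℤ[q,q⁻¹]`. -/
noncomputable abbrev qinv : LaurentPolynomial ℤ := T (-1)

lemma q_mul_qinv : q * qinv = 1 := by rw [← T_add]; norm_num

/-- The matrix `A_q = [[q+1, q⁻¹], [1, q⁻¹]]` in `SL(2, ℤ[q,q⁻¹])`. -/
noncomputable def Aq : Matrix.SpecialLinearGroup (Fin 2) (LaurentPolynomial ℤ) :=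
  ⟨!![q + 1, qinv; 1, qinv], by
    rw [Matrix.det_fin_two_of]
    linear_combination q_mul_qinv⟩

/-- The matrix `B_q = [[(q³+q²+2q+1)·q⁻¹, (q+1)·q⁻²], [(q+1)·q⁻¹, q⁻²]]`
in `SL(2, ℤ[q,q⁻¹])`. -/
noncomputable def Bq : Matrix.SpecialLinearGroup (Fin 2) (LaurentPolynomial ℤ) :=
  ⟨!![(q ^ 3 + q ^ 2 + 2 * q + 1) * qinv, (q + 1) * qinv ^ 2;
      (q + 1) * qinv, qinv ^ 2], by
    rw [Matrix.det_fin_two_of]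
    linear_combination (q ^ 2 * qinv ^ 2 + q * qinv + 1) * q_mul_qinv⟩

/-! By the Fricke identity, `tr [A, B] + 2 = x² + y² + z² - x y z` for `A, B ∈ SL₂` with
`x = tr A`, `y = tr B`, `z = tr AB`. Here all three traces are polynomials in `t = q + q⁻¹`:
`x = t + 1`, `y = t (t + 1)`, `z = (t + 1)(t² + t - 1)`, so the right-hand side collapses to
`-(t - 2)(t + 1)²`, which is the claim since `(q - 1)² q⁻¹ = t - 2` and `(1 + q + q²) q⁻¹ = t + 1`. -/

theorem Matrix.trace_mul_mul_adjugate_mul_adjugate_fin_two_s2 {R : Type*} [CommRing R]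
    (A B : Matrix (Fin 2) (Fin 2) R) :
    trace (A * B * adjugate A * adjugate B) =
      A.det * trace B ^ 2 + B.det * trace A ^ 2 + trace (A * B) ^ 2
        - trace A * trace B * trace (A * B) - 2 * A.det * B.det := by
  simp only [adjugate_fin_two, det_fin_two, trace_fin_two, mul_apply, Fin.sum_univ_two, of_apply,
    cons_val', cons_val_zero, cons_val_one, empty_val', cons_val_fin_one]
  ring

theorem Matrix.SpecialLinearGroup.trace_commutator_fin_two {R : Type*} [CommRing R]
    (A B : SpecialLinearGroup (Fin 2) R) :
    trace ((A * B * A⁻¹ * B⁻¹ : SpecialLinearGroup (Fin 2) R) : Matrix (Fin 2) (Fin 2) R) + 2 =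
      trace (A : Matrix (Fin 2) (Fin 2) R) ^ 2 + trace (B : Matrix (Fin 2) (Fin 2) R) ^ 2
        + trace ((A : Matrix (Fin 2) (Fin 2) R) * (B : Matrix (Fin 2) (Fin 2) R)) ^ 2
        - trace (A : Matrix (Fin 2) (Fin 2) R) * trace (B : Matrix (Fin 2) (Fin 2) R)
          * trace ((A : Matrix (Fin 2) (Fin 2) R) * (B : Matrix (Fin 2) (Fin 2) R)) := by
  simp only [coe_mul, coe_inv]
  rw [trace_mul_mul_adjugate_mul_adjugate_fin_two_s2, A.det_coe, B.det_coe]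
  ring

lemma trace_Aq : trace (Aq : Matrix (Fin 2) (Fin 2) (LaurentPolynomial ℤ)) = q + qinv + 1 := by
  simp only [Aq, trace_fin_two_of]
  ring

lemma trace_Bq : trace (Bq : Matrix (Fin 2) (Fin 2) (LaurentPolynomial ℤ)) =
    (q + qinv) * (q + qinv + 1) := by
  simp only [Bq, trace_fin_two_of]
  linear_combination (q + q ^ 2) * q_mul_qinv

lemma trace_Aq_mul_Bq :
    trace ((Aq : Matrix (Fin 2) (Fin 2) (LaurentPolynomial ℤ)) *
      (Bq : Matrix (Fin 2) (Fin 2) (LaurentPolynomial ℤ))) =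
      (q + qinv + 1) * ((q + qinv) ^ 2 + (q + qinv) - 1) := by
  simp only [Aq, Bq, mul_fin_two, trace_fin_two_of]
  linear_combination (2 * q ^ 2 + q ^ 3 - 1 - qinv) * q_mul_qinv

/-- `Tr(A_q·B_q·A_q⁻¹·B_q⁻¹) + 2 = −(q−1)²·(1+q+q²)²·q⁻³` in `ℤ[q,q⁻¹]`. -/
theorem trace_commutator_AqBq :
    trace ((Aq * Bq * Aq⁻¹ * Bq⁻¹ :
        Matrix.SpecialLinearGroup (Fin 2) (LaurentPolynomial ℤ)) :
        Matrix (Fin 2) (Fin 2) (LaurentPolynomial ℤ)) + 2 =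
      -((q - 1) ^ 2 * (1 + q + q ^ 2) ^ 2 * qinv ^ 3) := by
  have hq_sub_one : (q - 1) ^ 2 * qinv = q + qinv - 2 := by linear_combination (q - 2) * q_mul_qinv
  have hq_geom : (1 + q + q ^ 2) * qinv = q + qinv + 1 := by linear_combination (1 + q) * q_mul_qinv
  rw [SpecialLinearGroup.trace_commutator_fin_two, trace_Aq, trace_Bq, trace_Aq_mul_Bq,
    show (q - 1) ^ 2 * (1 + q + q ^ 2) ^ 2 * qinv ^ 3
      = (q - 1) ^ 2 * qinv * ((1 + q + q ^ 2) * qinv) ^ 2 by ring, hq_sub_one, hq_geom]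
  ring
end

section
/- For every triple (M, L, N) in the q-Cohn tree 𝒯_q one has Tr(M·N·M⁻¹·N⁻¹) + 2 = −(q−1)²·(1+q+q²)²·q⁻³ in ℤ[q,q⁻¹]. -/
/-!
The middle entry of every triple is `L = M * N`, so the two moves send the commutator `⁅M, N⁆`
to `⁅M, M * N⁆ = M * ⁅M, N⁆ * M⁻¹` and to `⁅M * N, N⁆ = ⁅M, N⁆`. Its trace is therefore constant
on the tree, equal to the trace of `⁅A_q, B_q⁆`, which is a direct computation.
-/

open Matrix LaurentPolynomial

/-- The `q`-Cohn tree `𝒯_q`: the smallest set of triples of matrices in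
`SL(2, ℤ[q,q⁻¹])` containing `(A_q, A_q·B_q, B_q)` and closed under the two moves
`(M, L, N) ↦ (M, M·L, L)` and `(M, L, N) ↦ (L, L·N, N)`. -/
inductive qCohnTree :
    Matrix.SpecialLinearGroup (Fin 2) (LaurentPolynomial ℤ) →
    Matrix.SpecialLinearGroup (Fin 2) (LaurentPolynomial ℤ) →
    Matrix.SpecialLinearGroup (Fin 2) (LaurentPolynomial ℤ) → Prop
  | seed : qCohnTree Aq (Aq * Bq) Bq
  | left {M L N} : qCohnTree M L N → qCohnTree M (M * L) L
  | right {M L N} : qCohnTree M L N → qCohnTree L (L * N) N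


open scoped commutatorElement

section Commutator

variable {G : Type*} [Group G]

lemma commutatorElement_self_mul (g h : G) : ⁅g, g * h⁆ = g * ⁅g, h⁆ * g⁻¹ := by
  simp only [commutatorElement_def]; group

lemma commutatorElement_mul_self (g h : G) : ⁅g * h, h⁆ = ⁅g, h⁆ := by
  simp only [commutatorElement_def]; group

end Commutator

lemma Matrix.SpecialLinearGroup.trace_conj {n R : Type*} [Fintype n] [DecidableEq n] [CommRing R]
    (g x : SpecialLinearGroup n R) :
    trace ((g * x * g⁻¹ : SpecialLinearGroup n R) : Matrix n n R) = trace (x : Matrix n n R) := by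
  rw [SpecialLinearGroup.coe_mul, SpecialLinearGroup.coe_mul, trace_mul_comm, ← Matrix.mul_assoc,
    ← SpecialLinearGroup.coe_mul, inv_mul_cancel, SpecialLinearGroup.coe_one, Matrix.one_mul]

lemma qCohnTree.middle_eq_mul {M L N} (h : qCohnTree M L N) : L = M * N := by
  induction h with
  | seed => rfl
  | left _ ih => rw [ih]
  | right _ ih => rw [ih]

lemma qCohnTree.trace_commutatorElement {M L N} (h : qCohnTree M L N) :
    trace ((⁅M, N⁆ : SpecialLinearGroup (Fin 2) (LaurentPolynomial ℤ)) :
      Matrix (Fin 2) (Fin 2) (LaurentPolynomial ℤ)) =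
      trace ((⁅Aq, Bq⁆ : SpecialLinearGroup (Fin 2) (LaurentPolynomial ℤ)) :
      Matrix (Fin 2) (Fin 2) (LaurentPolynomial ℤ)) := by
  induction h with
  | seed => rfl
  | left h ih =>
    rw [h.middle_eq_mul, commutatorElement_self_mul, SpecialLinearGroup.trace_conj, ih]
  | right h ih => rw [h.middle_eq_mul, commutatorElement_mul_self, ih]

lemma trace_commutatorElement_Aq_Bq :
    trace ((⁅Aq, Bq⁆ : SpecialLinearGroup (Fin 2) (LaurentPolynomial ℤ)) :
      Matrix (Fin 2) (Fin 2) (LaurentPolynomial ℤ)) + 2 =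
      -((q - 1) ^ 2 * (1 + q + q ^ 2) ^ 2 * qinv ^ 3) := by
  change trace (!![q + 1, qinv; 1, qinv] *
    !![(q ^ 3 + q ^ 2 + 2 * q + 1) * qinv, (q + 1) * qinv ^ 2; (q + 1) * qinv, qinv ^ 2] *
    adjugate !![q + 1, qinv; 1, qinv] *
    adjugate !![(q ^ 3 + q ^ 2 + 2 * q + 1) * qinv, (q + 1) * qinv ^ 2; (q + 1) * qinv, qinv ^ 2])
      + 2 = _
  -- inverses in `SL(2)` are adjugates; the identity then holds modulo `q * q⁻¹ = 1`
  simp only [adjugate_fin_two_of, mul_fin_two, trace_fin_two_of]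
  linear_combination
    (-2 - qinv ^ 3 - 2 * q * qinv - q * qinv ^ 4 - 2 * q ^ 2 * qinv ^ 2) * q_mul_qinv

/-- For every triple `(M, L, N)` in the `q`-Cohn tree,
`Tr(M·N·M⁻¹·N⁻¹) + 2 = −(q−1)²·(1+q+q²)²·q⁻³` in `ℤ[q,q⁻¹]`. -/
theorem trace_commutator_qCohnTree
    (M L N : Matrix.SpecialLinearGroup (Fin 2) (LaurentPolynomial ℤ))
    (h : qCohnTree M L N) :
    trace ((M * N * M⁻¹ * N⁻¹ :
        Matrix.SpecialLinearGroup (Fin 2) (LaurentPolynomial ℤ)) :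
        Matrix (Fin 2) (Fin 2) (LaurentPolynomial ℤ)) + 2 =
      -((q - 1) ^ 2 * (1 + q + q ^ 2) ^ 2 * qinv ^ 3) := by
  rw [← commutatorElement_def, h.trace_commutatorElement, trace_commutatorElement_Aq_Bq]
end

section
/- For every triple (M, L, N) in the q-Cohn tree 𝒯_q, each of the traces Tr(M), Tr(L), Tr(N) is divisible by [3]_q = 1+q+q² in the ring ℤ[q,q⁻¹]. -/
open Matrix LaurentPolynomial

/- By Cayley–Hamilton in dimension two, `A² = (tr A) A - (det A) I`, so in `SL(2)`
`tr (M²N) = tr M · tr (MN) - tr N` and `tr (MN²) = tr (MN) · tr N - tr M`.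
Hence if `[3]_q` divides the three traces of a triple `(M, MN, N)`, it divides those of both
its children `(M, M²N, MN)` and `(MN, MN², N)`; for the seed `(A_q, A_q B_q, B_q)` it is a
direct computation. -/

namespace Matrix

variable {R : Type*} [CommRing R]

theorem trace_mul_mul_self_left (A B : Matrix (Fin 2) (Fin 2) R) :
    trace (A * (A * B)) = trace A * trace (A * B) - det A * trace B := by
  simp only [trace_fin_two, mul_apply, Fin.sum_univ_two, det_fin_two]
  ring

theorem trace_mul_mul_self_right (A B : Matrix (Fin 2) (Fin 2) R) :
    trace (A * B * B) = trace (A * B) * trace B - det B * trace A := by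
  rw [Matrix.mul_assoc, trace_mul_comm, Matrix.mul_assoc, trace_mul_mul_self_left,
    trace_mul_comm B A]
  ring

namespace SpecialLinearGroup

theorem dvd_trace_mul_mul_self_left {d : R} (M N : SpecialLinearGroup (Fin 2) R)
    (hMN : d ∣ trace (M * N : Matrix (Fin 2) (Fin 2) R))
    (hN : d ∣ trace (N : Matrix (Fin 2) (Fin 2) R)) :
    d ∣ trace (M * (M * N) : Matrix (Fin 2) (Fin 2) R) := by
  rw [trace_mul_mul_self_left, det_coe, one_mul]
  exact dvd_sub (hMN.mul_left _) hN

theorem dvd_trace_mul_mul_self_right {d : R} (M N : SpecialLinearGroup (Fin 2) R)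
    (hM : d ∣ trace (M : Matrix (Fin 2) (Fin 2) R))
    (hMN : d ∣ trace (M * N : Matrix (Fin 2) (Fin 2) R)) :
    d ∣ trace (M * N * N : Matrix (Fin 2) (Fin 2) R) := by
  rw [trace_mul_mul_self_right, det_coe, one_mul]
  exact dvd_sub (hMN.mul_right _) hM

end SpecialLinearGroup

end Matrix

namespace qCohnTree

theorem eq_mul {M L N : SpecialLinearGroup (Fin 2) (LaurentPolynomial ℤ)} (h : qCohnTree M L N) :
    L = M * N := by
  cases h <;> rfl

theorem dvd_trace {d : LaurentPolynomial ℤ}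
    (hA : d ∣ trace (Aq : Matrix (Fin 2) (Fin 2) (LaurentPolynomial ℤ)))
    (hAB : d ∣ trace (Aq * Bq : Matrix (Fin 2) (Fin 2) (LaurentPolynomial ℤ)))
    (hB : d ∣ trace (Bq : Matrix (Fin 2) (Fin 2) (LaurentPolynomial ℤ)))
    {M L N : SpecialLinearGroup (Fin 2) (LaurentPolynomial ℤ)} (h : qCohnTree M L N) :
    d ∣ trace (M : Matrix (Fin 2) (Fin 2) (LaurentPolynomial ℤ)) ∧
    d ∣ trace (L : Matrix (Fin 2) (Fin 2) (LaurentPolynomial ℤ)) ∧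
    d ∣ trace (N : Matrix (Fin 2) (Fin 2) (LaurentPolynomial ℤ)) := by
  induction h with
  | seed => exact ⟨hA, hAB, hB⟩
  | left h ih =>
    obtain ⟨hM, hL, hN⟩ := ih
    rw [h.eq_mul] at hL ⊢
    exact ⟨hM, SpecialLinearGroup.dvd_trace_mul_mul_self_left _ _ hL hN, hL⟩
  | right h ih =>
    obtain ⟨hM, hL, hN⟩ := ih
    rw [h.eq_mul] at hL ⊢
    exact ⟨hL, SpecialLinearGroup.dvd_trace_mul_mul_self_right _ _ hM hL, hN⟩

end qCohnTree

theorem threeq_dvd_trace_Aq :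
    (1 + q + q ^ 2) ∣ trace (Aq : Matrix (Fin 2) (Fin 2) (LaurentPolynomial ℤ)) := by
  refine ⟨qinv, ?_⟩
  simp only [Aq, trace_fin_two_of]
  linear_combination (-1 - q) * q_mul_qinv

theorem threeq_dvd_trace_Bq :
    (1 + q + q ^ 2) ∣ trace (Bq : Matrix (Fin 2) (Fin 2) (LaurentPolynomial ℤ)) := by
  refine ⟨1 + qinv ^ 2, ?_⟩
  simp only [Bq, trace_fin_two_of]
  linear_combination (q ^ 2 - q * qinv + q - qinv + 1) * q_mul_qinv

theorem threeq_dvd_trace_Aq_mul_Bq :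
    (1 + q + q ^ 2) ∣ trace (Aq * Bq : Matrix (Fin 2) (Fin 2) (LaurentPolynomial ℤ)) := by
  refine ⟨q + 1 + qinv + qinv ^ 2 + qinv ^ 3, ?_⟩
  simp only [Aq, Bq, mul_fin_two, trace_fin_two_of]
  linear_combination
    (q ^ 3 + 2 * q ^ 2 - q * qinv ^ 2 - q * qinv + 2 * q - qinv ^ 2 + 1) * q_mul_qinv

/-- For every triple `(M, L, N)` in the `q`-Cohn tree, each of the traces
`Tr(M)`, `Tr(L)`, `Tr(N)` is divisible by `[3]_q = 1 + q + q²` in `ℤ[q,q⁻¹]`. -/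
theorem threeq_dvd_trace_qCohnTree
    (M L N : Matrix.SpecialLinearGroup (Fin 2) (LaurentPolynomial ℤ))
    (h : qCohnTree M L N) :
    (1 + q + q ^ 2) ∣ trace (M : Matrix (Fin 2) (Fin 2) (LaurentPolynomial ℤ)) ∧
    (1 + q + q ^ 2) ∣ trace (L : Matrix (Fin 2) (Fin 2) (LaurentPolynomial ℤ)) ∧
    (1 + q + q ^ 2) ∣ trace (N : Matrix (Fin 2) (Fin 2) (LaurentPolynomial ℤ)) :=
  qCohnTree.dvd_trace threeq_dvd_trace_Aq threeq_dvd_trace_Aq_mul_Bq threeq_dvd_trace_Bq h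
end

section
/- For every word s ∈ List Bool, let (M, L, N) be the triple of matrices obtained from (A_q, A_q·B_q, B_q) by applying, for each letter of s, the move (M, L, N) ↦ (M, M·L, L) for the letter 0 and the move (M, L, N) ↦ (L, L·N, N) for the letter 1, and let (x, y, z) be the triple of Laurent polynomials obtained from the seed (q⁻¹, (q⁴+q³+q²+q+1)·q⁻³, (q²+1)·q⁻²) by applying, for each corresponding letter of s, the move (x, y, z) ↦ (x, [3]_q·x·y − z, y) for the letter 0 and the move (x, y, z) ↦ (y, [3]_q·y·z − x, z) for the letter 1. Then (Tr M, Tr L, Tr N) = ([3]_q·x, [3]_q·y, [3]_q·z). -/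
open Matrix LaurentPolynomial

/-- One move on triples of matrices: `false ↦ (M, M·L, L)`, `true ↦ (L, L·N, N)`. -/
noncomputable def matMove (b : Bool)
    (p : Matrix.SpecialLinearGroup (Fin 2) (LaurentPolynomial ℤ) ×
         Matrix.SpecialLinearGroup (Fin 2) (LaurentPolynomial ℤ) ×
         Matrix.SpecialLinearGroup (Fin 2) (LaurentPolynomial ℤ)) :
    Matrix.SpecialLinearGroup (Fin 2) (LaurentPolynomial ℤ) ×
    Matrix.SpecialLinearGroup (Fin 2) (LaurentPolynomial ℤ) ×
    Matrix.SpecialLinearGroup (Fin 2) (LaurentPolynomial ℤ) :=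
  match b, p with
  | false, (M, L, _) => (M, M * L, L)
  | true, (_, L, N) => (L, L * N, N)

/-- One move on triples of Laurent polynomials:
`false ↦ (x, [3]_q·x·y − z, y)`, `true ↦ (y, [3]_q·y·z − x, z)`. -/
noncomputable def polyMove (b : Bool)
    (p : LaurentPolynomial ℤ × LaurentPolynomial ℤ × LaurentPolynomial ℤ) :
    LaurentPolynomial ℤ × LaurentPolynomial ℤ × LaurentPolynomial ℤ :=
  match b, p with
  | false, (x, y, z) => (x, (1 + q + q ^ 2) * x * y - z, y)
  | true, (x, y, z) => (y, (1 + q + q ^ 2) * y * z - x, z)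

/-!
Each move replaces the middle matrix by `M·(M·N)` or `(M·N)·N`. For `M` of determinant one,
Cayley–Hamilton gives `M² = tr M • M - 1`, hence the Markov-type trace identities
`tr(M·M·N) = tr M · tr(M·N) - tr N` and `tr(M·N·N) = tr(M·N) · tr N - tr M`. So as long as the
middle matrix is the product of the outer two and the traces are `[3]_q` times the polynomial
triple, the matrix move and the polynomial move preserve both properties; the seed satisfies them
because `q·q⁻¹ = 1`.
-/

namespace Matrix

variable {R : Type*} [CommRing R]

theorem mul_self_eq_trace_smul_sub_det_smul_one (M : Matrix (Fin 2) (Fin 2) R) :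
    M * M = trace M • M - det M • (1 : Matrix (Fin 2) (Fin 2) R) := by
  ext i j
  fin_cases i <;> fin_cases j <;>
    simp [mul_apply, trace_fin_two, det_fin_two] <;> ring

theorem trace_mul_self_mul_of_det_eq_one {M : Matrix (Fin 2) (Fin 2) R} (hM : det M = 1)
    (N : Matrix (Fin 2) (Fin 2) R) :
    trace (M * M * N) = trace M * trace (M * N) - trace N := by
  rw [mul_self_eq_trace_smul_sub_det_smul_one, hM, sub_mul, smul_mul, one_smul, one_mul,
    trace_sub, trace_smul, smul_eq_mul]

theorem trace_mul_mul_self_of_det_eq_one (M : Matrix (Fin 2) (Fin 2) R)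
    {N : Matrix (Fin 2) (Fin 2) R} (hN : det N = 1) :
    trace (M * N * N) = trace (M * N) * trace N - trace M := by
  rw [mul_assoc, mul_self_eq_trace_smul_sub_det_smul_one, hN, one_smul, mul_sub,
    Matrix.mul_smul, mul_one, trace_sub, trace_smul, smul_eq_mul, mul_comm]

end Matrix

open Matrix.SpecialLinearGroup
open scoped MatrixGroups

def LiesOver {R : Type*} [CommRing R] (c : R)
    (P : SL(2, R) × SL(2, R) × SL(2, R)) (p : R × R × R) : Prop :=
  P.2.1 = P.1 * P.2.2 ∧
    (trace (P.1 : Matrix (Fin 2) (Fin 2) R), trace (P.2.1 : Matrix (Fin 2) (Fin 2) R),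
      trace (P.2.2 : Matrix (Fin 2) (Fin 2) R)) = (c * p.1, c * p.2.1, c * p.2.2)

theorem liesOver_matMove {P : SL(2, ℤ[T;T⁻¹]) × SL(2, ℤ[T;T⁻¹]) × SL(2, ℤ[T;T⁻¹])}
    {p : ℤ[T;T⁻¹] × ℤ[T;T⁻¹] × ℤ[T;T⁻¹]} (h : LiesOver (1 + q + q ^ 2) P p) (b : Bool) :
    LiesOver (1 + q + q ^ 2) (matMove b P) (polyMove b p) := by
  obtain ⟨M, L, N⟩ := P
  obtain ⟨x, y, z⟩ := p
  obtain ⟨hL, htr⟩ := h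
  dsimp only at hL htr
  subst hL
  simp only [Prod.mk.injEq] at htr
  obtain ⟨hM, hMN, hN⟩ := htr
  cases b with
  | false =>
    have hMMN : trace (↑(M * (M * N)) : Matrix (Fin 2) (Fin 2) ℤ[T;T⁻¹]) =
        (1 + q + q ^ 2) * ((1 + q + q ^ 2) * x * y - z) := by
      rw [coe_mul, coe_mul, ← mul_assoc, trace_mul_self_mul_of_det_eq_one M.2, ← coe_mul,
        hM, hMN, hN]
      ring
    exact ⟨rfl, by rw [matMove, polyMove, hM, hMMN, hMN]⟩
  | true =>
    have hMNN : trace (↑(M * N * N) : Matrix (Fin 2) (Fin 2) ℤ[T;T⁻¹]) =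
        (1 + q + q ^ 2) * ((1 + q + q ^ 2) * y * z - x) := by
      rw [coe_mul, coe_mul, trace_mul_mul_self_of_det_eq_one _ N.2, ← coe_mul, hM, hMN, hN]
      ring
    exact ⟨rfl, by rw [matMove, polyMove, hMN, hMNN, hN]⟩

theorem liesOver_foldl_matMove {P : SL(2, ℤ[T;T⁻¹]) × SL(2, ℤ[T;T⁻¹]) × SL(2, ℤ[T;T⁻¹])}
    {p : ℤ[T;T⁻¹] × ℤ[T;T⁻¹] × ℤ[T;T⁻¹]} (h : LiesOver (1 + q + q ^ 2) P p) (s : List Bool) :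
    LiesOver (1 + q + q ^ 2) (s.foldl (fun P b => matMove b P) P)
      (s.foldl (fun p b => polyMove b p) p) := by
  induction s generalizing P p with
  | nil => exact h
  | cons b s ih => exact ih (liesOver_matMove h b)

theorem coe_Aq : (Aq : Matrix (Fin 2) (Fin 2) ℤ[T;T⁻¹]) = !![q + 1, qinv; 1, qinv] :=
  rfl

theorem coe_Bq : (Bq : Matrix (Fin 2) (Fin 2) ℤ[T;T⁻¹]) =
    !![(q ^ 3 + q ^ 2 + 2 * q + 1) * qinv, (q + 1) * qinv ^ 2; (q + 1) * qinv, qinv ^ 2] :=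
  rfl

theorem liesOver_seed : LiesOver (1 + q + q ^ 2) (Aq, Aq * Bq, Bq)
    (qinv, (q ^ 4 + q ^ 3 + q ^ 2 + q + 1) * qinv ^ 3, (q ^ 2 + 1) * qinv ^ 2) := by
  refine ⟨rfl, ?_⟩
  simp only [coe_mul, coe_Aq, coe_Bq, mul_fin_two, trace_fin_two_of, Prod.mk.injEq]
  grind [q_mul_qinv]

/-- For every word `s : List Bool`, the triple of traces of the matrices obtained from
`(A_q, A_q·B_q, B_q)` by the matrix moves along `s` equals `[3]_q` times the triple of
Laurent polynomials obtained from the seed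
`(q⁻¹, (q⁴+q³+q²+q+1)·q⁻³, (q²+1)·q⁻²)` by the corresponding polynomial moves. -/
theorem trace_qCohn_eq_threeq_mul_qMarkov (s : List Bool) :
    (fun P : Matrix.SpecialLinearGroup (Fin 2) (LaurentPolynomial ℤ) ×
        Matrix.SpecialLinearGroup (Fin 2) (LaurentPolynomial ℤ) ×
        Matrix.SpecialLinearGroup (Fin 2) (LaurentPolynomial ℤ) =>
      (trace (P.1 : Matrix (Fin 2) (Fin 2) (LaurentPolynomial ℤ)),
       trace (P.2.1 : Matrix (Fin 2) (Fin 2) (LaurentPolynomial ℤ)),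
       trace (P.2.2 : Matrix (Fin 2) (Fin 2) (LaurentPolynomial ℤ))))
      (s.foldl (fun p b => matMove b p) (Aq, Aq * Bq, Bq)) =
    (fun P : LaurentPolynomial ℤ × LaurentPolynomial ℤ × LaurentPolynomial ℤ =>
      ((1 + q + q ^ 2) * P.1, (1 + q + q ^ 2) * P.2.1, (1 + q + q ^ 2) * P.2.2))
      (s.foldl (fun p b => polyMove b p)
        (qinv, (q ^ 4 + q ^ 3 + q ^ 2 + q + 1) * qinv ^ 3, (q ^ 2 + 1) * qinv ^ 2)) :=
  (liesOver_foldl_matMove liesOver_seed s).2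
end

section
/- Let 𝒯_t be the smallest subset of ℤ[t]³ containing the seed (1, t² − t − 1, t − 1) and closed under the two moves (x, y, z) ↦ (x, t·x·y − z, y) and (x, y, z) ↦ (y, t·y·z − x, z). Then every triple (f, g, h) ∈ 𝒯_t satisfies the t-deformed Markov equation f² + g² + h² + (t − 3) = t·f·g·h in ℤ[t]. -/
/-!
The deformed Markov equation is quadratic and monic in each variable, so replacing a root
`z` by the other Vieta root `t·x·y − z` preserves it; both castling moves are such
replacements followed by a permutation of the (symmetric) equation. Hence it propagates
from the seed, where it is a direct computation.
-/

open Polynomial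

/-- The castling Markov tree `𝒯_t`: the smallest subset of `ℤ[t]³` containing the seed
`(1, t² − t − 1, t − 1)` and closed under the moves `(x, y, z) ↦ (x, t·x·y − z, y)` and
`(x, y, z) ↦ (y, t·y·z − x, z)`. -/
inductive CastlingMarkovTree : Polynomial ℤ → Polynomial ℤ → Polynomial ℤ → Prop
  | seed : CastlingMarkovTree 1 (X ^ 2 - X - 1) (X - 1)
  | left {x y z} : CastlingMarkovTree x y z → CastlingMarkovTree x (X * x * y - z) y
  | right {x y z} : CastlingMarkovTree x y z → CastlingMarkovTree y (X * y * z - x) z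

def IsDeformedMarkovTriple {R : Type*} [CommRing R] (t x y z : R) : Prop :=
  x ^ 2 + y ^ 2 + z ^ 2 + (t - 3) = t * x * y * z

namespace IsDeformedMarkovTriple

variable {R : Type*} [CommRing R] {t x y z : R}

theorem castle_left (h : IsDeformedMarkovTriple t x y z) :
    IsDeformedMarkovTriple t x (t * x * y - z) y := by
  unfold IsDeformedMarkovTriple at *
  linear_combination h

theorem castle_right (h : IsDeformedMarkovTriple t x y z) :
    IsDeformedMarkovTriple t y (t * y * z - x) z := by
  unfold IsDeformedMarkovTriple at *
  linear_combination h

end IsDeformedMarkovTriple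

/-- Every triple `(f, g, h)` in the castling Markov tree satisfies the `t`-deformed
Markov equation `f² + g² + h² + (t − 3) = t·f·g·h` in `ℤ[t]`. -/
theorem castlingMarkovTree_solves (f g h : Polynomial ℤ)
    (hfgh : CastlingMarkovTree f g h) :
    f ^ 2 + g ^ 2 + h ^ 2 + (X - 3) = X * f * g * h := by
  show IsDeformedMarkovTriple X f g h
  induction hfgh with
  | seed => unfold IsDeformedMarkovTriple; ring
  | left _ ih => exact ih.castle_left
  | right _ ih => exact ih.castle_right
end

section
/- Let a, b, c ∈ ℤ[q,q⁻¹]. Then (q·a, q·b, q·c) satisfies the equation X² + Y² + Z² + (q⁻¹·[3]_q − 3) = q⁻¹·[3]_q·X·Y·Z if and only if (a, b, c) satisfies the q-Markov equation x² + y² + z² + (q−1)²·q⁻³ = [3]_q·x·y·z. In particular, the substitution t = q⁻¹·[3]_q and the scaling by q give a one-to-one correspondence between solutions of the t-deformed Markov equation x² + y² + z² + (t − 3) = t·x·y·z at t = q⁻¹·[3]_q and solutions of the q-Markov equation. -/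
open LaurentPolynomial

/-!
With `t = q⁻¹·[3]_q` one has `t - 3 = q⁻¹(q - 1)² = q²·(q - 1)²q⁻³` and `t·q³ = q²·[3]_q`,
so the `t`-deformed Markov equation at `(q·a, q·b, q·c)` is the `q`-Markov equation at
`(a, b, c)` multiplied through by the unit `q²`.
-/

section

variable {R : Type*} [CommRing R] {u v : R}

theorem tMarkov_const_eq_of_mul_eq_one (h : v * u = 1) :
    v * (1 + u + u ^ 2) - 3 = u ^ 2 * ((u - 1) ^ 2 * v ^ 3) := by
  linear_combination (3 - (u - 1) ^ 2 * v * (v * u + 1)) * h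

theorem tMarkov_product_eq_of_mul_eq_one (h : v * u = 1) (a b c : R) :
    v * (1 + u + u ^ 2) * (u * a) * (u * b) * (u * c) =
      u ^ 2 * ((1 + u + u ^ 2) * a * b * c) := by
  linear_combination (u ^ 2 * (1 + u + u ^ 2) * a * b * c) * h

theorem tMarkov_iff_qMarkov_of_mul_eq_one (h : v * u = 1) (a b c : R) :
    ((u * a) ^ 2 + (u * b) ^ 2 + (u * c) ^ 2 + (v * (1 + u + u ^ 2) - 3) =
        v * (1 + u + u ^ 2) * (u * a) * (u * b) * (u * c)) ↔
      (a ^ 2 + b ^ 2 + c ^ 2 + (u - 1) ^ 2 * v ^ 3 = (1 + u + u ^ 2) * a * b * c) := by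
  have hu : IsUnit (u ^ 2) := (IsUnit.of_mul_eq_one_right v h).pow 2
  have hlhs : (u * a) ^ 2 + (u * b) ^ 2 + (u * c) ^ 2 + u ^ 2 * ((u - 1) ^ 2 * v ^ 3) =
      u ^ 2 * (a ^ 2 + b ^ 2 + c ^ 2 + (u - 1) ^ 2 * v ^ 3) := by
    ring
  rw [tMarkov_const_eq_of_mul_eq_one h, tMarkov_product_eq_of_mul_eq_one h, hlhs,
    hu.mul_right_inj]

end

theorem qinv_mul_q : qinv * q = 1 := by
  rw [← T_add, neg_add_cancel, T_zero]

/-- For `a, b, c ∈ ℤ[q,q⁻¹]`, the triple `(q·a, q·b, q·c)` satisfies the `t`-deformed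
Markov equation `X² + Y² + Z² + (q⁻¹·[3]_q − 3) = q⁻¹·[3]_q·X·Y·Z` at `t = q⁻¹·[3]_q`
if and only if `(a, b, c)` satisfies the `q`-Markov equation
`x² + y² + z² + (q−1)²·q⁻³ = [3]_q·x·y·z`. -/
theorem tMarkov_iff_qMarkov (a b c : LaurentPolynomial ℤ) :
    ((q * a) ^ 2 + (q * b) ^ 2 + (q * c) ^ 2 + (qinv * (1 + q + q ^ 2) - 3) =
        qinv * (1 + q + q ^ 2) * (q * a) * (q * b) * (q * c)) ↔
      (a ^ 2 + b ^ 2 + c ^ 2 + (q - 1) ^ 2 * qinv ^ 3 = (1 + q + q ^ 2) * a * b * c) :=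
  tMarkov_iff_qMarkov_of_mul_eq_one qinv_mul_q a b c
end
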